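/- Let A be an N×T matrix and 0 ≤ R ≤ T. Then the infimum over Λ ∈ ℝ^{N×R} and F ∈ ℝ^{T×R} of ‖A − Λ F'‖²_HS equals the infimum over F ∈ ℝ^{T×R} of Tr(A M_F A'), and both equal Σ_{r=R+1}^{T} μ_r(A'A); moreover both infima are attained (e.g. by taking the columns of F to be orthonormal eigenvectors of A'A corresponding to its R largest eigenvalues and Λ = A F). -/

import Mathlib

open Matrix MeasureTheory
open scoped BigOperators

/-- Squared Frobenius (Hilbert–Schmidt) norm of a real matrix. -/
noncomputable def frobSq {n m : ℕ} (A : Matrix (Fin n) (Fin m) ℝ) : ℝ :=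
  Matrix.trace (A * Aᵀ)

/-- Operator (spectral) norm of a real matrix. -/
noncomputable def opNorm {n m : ℕ} (A : Matrix (Fin n) (Fin m) ℝ) : ℝ :=
  ‖LinearMap.toContinuousLinearMap (Matrix.toEuclideanLin A)‖

/-- Orthogonal projection matrix onto the column space of `A`. -/
noncomputable def projMat {n m : ℕ} (A : Matrix (Fin n) (Fin m) ℝ) : Matrix (Fin n) (Fin n) ℝ :=
  Matrix.toEuclideanLin.symm
    (((LinearMap.range (Matrix.toEuclideanLin A)).subtypeL.comp
      (Submodule.orthogonalProjection (LinearMap.range (Matrix.toEuclideanLin A))) :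
        EuclideanSpace ℝ (Fin n) →L[ℝ] EuclideanSpace ℝ (Fin n)) :
        EuclideanSpace ℝ (Fin n) →ₗ[ℝ] EuclideanSpace ℝ (Fin n))

/-- Annihilator `M_A = I - P_A`. -/
noncomputable def annMat {n m : ℕ} (A : Matrix (Fin n) (Fin m) ℝ) : Matrix (Fin n) (Fin n) ℝ :=
  1 - projMat A

/-- `mu S r` is the `r`-th largest eigenvalue (1-based, with multiplicity) of the
symmetric matrix `S`; it is `0` if `S` is not symmetric or `r ∉ {1,…,n}`. -/
noncomputable def mu {n : ℕ} (S : Matrix (Fin n) (Fin n) ℝ) (r : ℕ) : ℝ :=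
  if h : S.IsHermitian ∧ 1 ≤ r ∧ r ≤ n then
    (h.1.eigenvalues ∘ Tuple.sort h.1.eigenvalues)
      (Fin.rev ⟨r - 1, by obtain ⟨-, h1, h2⟩ := h; omega⟩)
  else 0

/-!
Put `S = AᵀA`. Since `Fᵀ M_F = 0`, `(A - ΛFᵀ) M_F = A M_F`, and splitting `‖A - ΛFᵀ‖²` along
`1 = M_F + P_F` gives `‖A - ΛFᵀ‖² ≥ ‖A M_F‖² = Tr(A M_F Aᵀ) = Tr(M_F S)`, with equality for
`Λ = AF` when `F` has orthonormal columns (then `P_F = FFᵀ`).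

In an orthonormal eigenbasis `v₁, …, v_T` of `S` ordered so that `μ₁ ≥ ⋯ ≥ μ_T ≥ 0`,
`Tr(M_F S) = ∑ pₖ μₖ` with weights `pₖ = vₖᵀ M_F vₖ ∈ [0, 1]` of total `T - Tr P_F ≥ T - R`.
Such weights cannot do better than putting weight one on the `T - R` smallest eigenvalues, so
`Tr(M_F S) ≥ ∑_{k > R} μₖ`, with equality when the columns of `F` are `v₁, …, v_R`.
-/

open Finset

lemma Finset.sum_le_sum_mul_of_card_le_sum {ι : Type*} [Fintype ι] [DecidableEq ι] {e p : ι → ℝ}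
    {s : Finset ι} (he : ∀ i, 0 ≤ e i) (hs : ∀ i ∈ s, ∀ j ∉ s, e i ≤ e j)
    (hp₀ : ∀ i, 0 ≤ p i) (hp₁ : ∀ i, p i ≤ 1) (hcard : (#s : ℝ) ≤ ∑ i, p i) :
    ∑ i ∈ s, e i ≤ ∑ i, e i * p i := by
  -- a level `t ≥ 0` separating the values of `e` on `s` from those off `s`
  obtain ⟨t, ht, hts, hst⟩ : ∃ t, 0 ≤ t ∧ (∀ i ∈ s, e i ≤ t) ∧ ∀ j ∉ s, t ≤ e j := by
    rcases sᶜ.eq_empty_or_nonempty with hc | hc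
    · exact ⟨∑ i, e i, sum_nonneg fun i _ => he i,
        fun i _ => single_le_sum (fun j _ => he j) (mem_univ i),
        fun j hj => absurd (mem_compl.mpr hj) (hc ▸ notMem_empty j)⟩
    · obtain ⟨j₀, hj₀, hmin⟩ := sᶜ.exists_min_image e hc
      exact ⟨e j₀, he j₀, fun i hi => hs i hi j₀ (mem_compl.mp hj₀),
        fun j hj => hmin j (mem_compl.mpr hj)⟩
  calc ∑ i ∈ s, e i
      ≤ ∑ i ∈ s, (e i * p i + t * (1 - p i)) :=
        sum_le_sum fun i hi => by nlinarith [hts i hi, hp₁ i]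
    _ = ∑ i ∈ s, e i * p i + t * (#s - ∑ i ∈ s, p i) := by
        rw [sum_add_distrib, ← mul_sum, sum_sub_distrib, sum_const, nsmul_one]
    _ ≤ ∑ i ∈ s, e i * p i + t * (∑ i, p i - ∑ i ∈ s, p i) := by gcongr
    _ = ∑ i ∈ s, e i * p i + ∑ i ∈ sᶜ, t * p i := by
        rw [← sum_compl_add_sum s p, add_sub_cancel_right, mul_sum]
    _ ≤ ∑ i ∈ s, e i * p i + ∑ i ∈ sᶜ, e i * p i := by
        gcongr with i hi
        · exact hp₀ i
        · exact hst i (mem_compl.mp hi)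
    _ = ∑ i, e i * p i := sum_add_sum_compl s _

lemma sum_Icc_eq_sum_filter_le_val (f : ℕ → ℝ) (n m : ℕ) :
    ∑ r ∈ Icc (m + 1) n, f r = ∑ k ∈ {k : Fin n | m ≤ (k : ℕ)}, f (k + 1) := by
  rw [sum_filter, Fin.sum_univ_eq_sum_range (fun r => if m ≤ r then f (r + 1) else 0),
    ← sum_filter]
  refine sum_nbij' (· - 1) (· + 1) ?_ ?_ ?_ ?_ ?_ <;> intro r hr <;> simp at hr ⊢ <;> try omega
  rw [Nat.sub_add_cancel (by omega)]

lemma Fin.card_filter_le_val {n m : ℕ} : #{k : Fin n | m ≤ (k : ℕ)} = n - m := by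
  simp_rw [← not_lt]
  rw [filter_not, card_sdiff_of_subset (filter_subset _ _), card_univ, Fintype.card_fin,
    Fin.card_filter_val_lt]
  omega

section

variable {n m k : ℕ} {S : Matrix (Fin n) (Fin n) ℝ}

lemma toEuclideanLin_projMat (F : Matrix (Fin n) (Fin m) ℝ) :
    toEuclideanLin (projMat F) =
      (LinearMap.range (toEuclideanLin F)).starProjection.toLinearMap := by
  simp [projMat, Submodule.starProjection]

lemma projMat_transpose (F : Matrix (Fin n) (Fin m) ℝ) : (projMat F)ᵀ = projMat F := by
  apply toEuclideanLin.injective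
  rw [← conjTranspose_eq_transpose_of_trivial, toEuclideanLin_conjTranspose_eq_adjoint,
    toEuclideanLin_projMat, (Submodule.starProjection_isSymmetric _).adjoint_eq]

lemma projMat_mul_self (F : Matrix (Fin n) (Fin m) ℝ) : projMat F * F = F := by
  apply toEuclideanLin.injective
  ext1 x
  rw [toLpLin_mul, LinearMap.comp_apply, toEuclideanLin_projMat]
  exact Submodule.starProjection_eq_self_iff.mpr (LinearMap.mem_range_self _ x)

lemma projMat_mul_eq_zero {F : Matrix (Fin n) (Fin m) ℝ} {Q : Matrix (Fin n) (Fin k) ℝ}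
    (h : Fᵀ * Q = 0) : projMat F * Q = 0 := by
  apply toEuclideanLin.injective
  ext1 x
  rw [toLpLin_mul, LinearMap.comp_apply, toEuclideanLin_projMat, map_zero, LinearMap.zero_apply]
  refine (Submodule.starProjection_apply_eq_zero_iff _).mpr ?_
  rintro _ ⟨y, rfl⟩
  rw [← LinearMap.adjoint_inner_right, ← toEuclideanLin_conjTranspose_eq_adjoint,
    conjTranspose_eq_transpose_of_trivial, ← LinearMap.comp_apply, ← toLpLin_mul, h]
  simp

lemma transpose_mul_projMat (F : Matrix (Fin n) (Fin m) ℝ) : Fᵀ * projMat F = Fᵀ := by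
  simpa [transpose_mul, projMat_transpose] using congrArg transpose (projMat_mul_self F)

lemma transpose_mul_annMat (F : Matrix (Fin n) (Fin m) ℝ) : Fᵀ * annMat F = 0 := by
  rw [annMat, Matrix.mul_sub, Matrix.mul_one, transpose_mul_projMat, sub_self]

lemma projMat_mul_annMat (F : Matrix (Fin n) (Fin m) ℝ) : projMat F * annMat F = 0 :=
  projMat_mul_eq_zero (transpose_mul_annMat F)

lemma projMat_mul_projMat (F : Matrix (Fin n) (Fin m) ℝ) : projMat F * projMat F = projMat F := by
  have h := projMat_mul_annMat F
  rw [annMat, Matrix.mul_sub, mul_one, sub_eq_zero] at h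
  exact h.symm

lemma annMat_transpose (F : Matrix (Fin n) (Fin m) ℝ) : (annMat F)ᵀ = annMat F := by
  rw [annMat, transpose_sub, transpose_one, projMat_transpose]

lemma annMat_mul_annMat (F : Matrix (Fin n) (Fin m) ℝ) : annMat F * annMat F = annMat F := by
  nth_rw 1 [annMat]
  rw [Matrix.sub_mul, one_mul, projMat_mul_annMat, sub_zero]

lemma projMat_eq_mul_transpose {F : Matrix (Fin n) (Fin m) ℝ} (hF : Fᵀ * F = 1) :
    projMat F = F * Fᵀ := by
  have hperp : Fᵀ * (1 - F * Fᵀ) = 0 := by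
    rw [Matrix.mul_sub, Matrix.mul_one, ← Matrix.mul_assoc, hF, Matrix.one_mul, sub_self]
  calc projMat F = projMat F * (F * Fᵀ) + projMat F * (1 - F * Fᵀ) := by
        rw [← mul_add, add_sub_cancel, mul_one]
    _ = F * Fᵀ := by rw [projMat_mul_eq_zero hperp, add_zero, ← Matrix.mul_assoc, projMat_mul_self]

lemma trace_projMat_le (F : Matrix (Fin n) (Fin m) ℝ) : trace (projMat F) ≤ m := by
  set K := LinearMap.range (toEuclideanLin F)
  have htrace : trace (projMat F) = Module.finrank ℝ K := by
    rw [← Matrix.trace_toLin_eq (projMat F) (PiLp.basisFun 2 ℝ (Fin n)), ← toLpLin_eq_toLin,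
      toEuclideanLin_projMat, ← K.range_starProjection]
    exact (LinearMap.IsIdempotentElem.isProj_range _
      (ContinuousLinearMap.IsIdempotentElem.toLinearMap K.isIdempotentElem_starProjection)).trace
  rw [htrace]
  exact_mod_cast (LinearMap.finrank_range_le _).trans (finrank_euclideanSpace_fin).le

lemma frobSq_nonneg (X : Matrix (Fin n) (Fin m) ℝ) : 0 ≤ frobSq X := by
  simpa [frobSq, conjTranspose_eq_transpose_of_trivial] using
    (posSemidef_self_mul_conjTranspose X).trace_nonneg

lemma frobSq_mul_eq_trace {Q : Matrix (Fin n) (Fin n) ℝ} (hQt : Qᵀ = Q) (hQQ : Q * Q = Q)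
    (X : Matrix (Fin k) (Fin n) ℝ) : frobSq (X * Q) = trace (X * Q * Xᵀ) := by
  rw [frobSq, transpose_mul, hQt, Matrix.mul_assoc, ← Matrix.mul_assoc Q, hQQ, ← Matrix.mul_assoc]

lemma frobSq_eq_frobSq_mul_annMat_add (X : Matrix (Fin k) (Fin n) ℝ)
    (F : Matrix (Fin n) (Fin m) ℝ) :
    frobSq X = frobSq (X * annMat F) + frobSq (X * projMat F) := by
  rw [frobSq_mul_eq_trace (annMat_transpose F) (annMat_mul_annMat F),
    frobSq_mul_eq_trace (projMat_transpose F) (projMat_mul_projMat F), ← trace_add,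
    ← Matrix.add_mul, ← Matrix.mul_add, annMat, sub_add_cancel, Matrix.mul_one, frobSq]

lemma trace_mul_annMat_mul_transpose_le (A : Matrix (Fin k) (Fin n) ℝ)
    (Λ : Matrix (Fin k) (Fin m) ℝ) (F : Matrix (Fin n) (Fin m) ℝ) :
    trace (A * annMat F * Aᵀ) ≤ frobSq (A - Λ * Fᵀ) :=
  calc trace (A * annMat F * Aᵀ)
      = frobSq ((A - Λ * Fᵀ) * annMat F) := by
        rw [Matrix.sub_mul, Matrix.mul_assoc Λ, transpose_mul_annMat, Matrix.mul_zero, sub_zero,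
          frobSq_mul_eq_trace (annMat_transpose F) (annMat_mul_annMat F)]
    _ ≤ frobSq (A - Λ * Fᵀ) := by
        rw [frobSq_eq_frobSq_mul_annMat_add (A - Λ * Fᵀ) F]
        exact le_add_of_nonneg_right (frobSq_nonneg _)

lemma frobSq_sub_mul_mul_transpose {F : Matrix (Fin n) (Fin m) ℝ} (hF : Fᵀ * F = 1)
    (A : Matrix (Fin k) (Fin n) ℝ) :
    frobSq (A - A * F * Fᵀ) = trace (A * annMat F * Aᵀ) := by
  rw [← frobSq_mul_eq_trace (annMat_transpose F) (annMat_mul_annMat F), annMat,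
    projMat_eq_mul_transpose hF, Matrix.mul_sub, Matrix.mul_one, Matrix.mul_assoc]

lemma mu_succ (hS : S.IsHermitian) (k : Fin n) :
    mu S (k + 1) = hS.eigenvalues (Tuple.sort hS.eigenvalues k.rev) := by
  rw [mu, dif_pos ⟨hS, by omega, k.isLt⟩]
  rfl

lemma antitone_mu_succ (hS : S.IsHermitian) : Antitone fun k : Fin n => mu S (k + 1) := by
  intro i j hij
  simp only [mu_succ hS]
  exact Tuple.monotone_sort hS.eigenvalues (Fin.rev_le_rev.mpr hij)

lemma mu_succ_nonneg (hS : S.PosSemidef) (k : Fin n) : 0 ≤ mu S (k + 1) := by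
  rw [mu_succ hS.isHermitian]
  exact hS.eigenvalues_nonneg _

/-- Orthonormal eigenvectors of `S` as columns, in the order of `mu S` (decreasing eigenvalues). -/
noncomputable def sortedEigenvectors (hS : S.IsHermitian) : Matrix (Fin n) (Fin n) ℝ :=
  (hS.eigenvectorUnitary : Matrix (Fin n) (Fin n) ℝ).submatrix id
    (Fin.revPerm.trans (Tuple.sort hS.eigenvalues))

lemma sortedEigenvectors_transpose_mul_self (hS : S.IsHermitian) :
    (sortedEigenvectors hS)ᵀ * sortedEigenvectors hS = 1 := by
  rw [sortedEigenvectors, transpose_submatrix, ← submatrix_mul _ _ _ _ _ Function.bijective_id,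
    ← conjTranspose_eq_transpose_of_trivial, ← star_eq_conjTranspose, Unitary.coe_star_mul_self,
    submatrix_one_equiv]

lemma sortedEigenvectors_mul_transpose_self (hS : S.IsHermitian) :
    sortedEigenvectors hS * (sortedEigenvectors hS)ᵀ = 1 := by
  rw [sortedEigenvectors, transpose_submatrix, submatrix_mul_transpose_submatrix,
    ← conjTranspose_eq_transpose_of_trivial, ← star_eq_conjTranspose,
    Unitary.mul_star_self_of_mem hS.eigenvectorUnitary.2]

lemma eq_sortedEigenvectors_mul_diagonal_mul (hS : S.IsHermitian) :
    S = sortedEigenvectors hS * diagonal (fun k : Fin n => mu S (k + 1)) *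
      (sortedEigenvectors hS)ᵀ := by
  conv_lhs => rw [hS.spectral_theorem, Unitary.conjStarAlgAut_apply, star_eq_conjTranspose,
    conjTranspose_eq_transpose_of_trivial]
  ext i l
  rw [mul_apply, mul_apply]
  simp only [mul_diagonal, transpose_apply, sortedEigenvectors, submatrix_apply, id, mu_succ hS,
    Function.comp_apply, RCLike.ofReal_real_eq_id]
  exact (Equiv.sum_comp (Fin.revPerm.trans (Tuple.sort hS.eigenvalues))
    fun j => hS.eigenvectorUnitary i j * hS.eigenvalues j * hS.eigenvectorUnitary l j).symm

lemma trace_mul_eq_sum_mul_mu (hS : S.IsHermitian) (Q : Matrix (Fin n) (Fin n) ℝ) :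
    trace (Q * S) =
      ∑ k, ((sortedEigenvectors hS)ᵀ * Q * sortedEigenvectors hS) k k * mu S (k + 1) := by
  conv_lhs => rw [eq_sortedEigenvectors_mul_diagonal_mul hS]
  rw [← Matrix.mul_assoc, trace_mul_comm, ← Matrix.mul_assoc, ← Matrix.mul_assoc]
  simp [trace, mul_diagonal]

lemma diag_transpose_mul_mul_nonneg {Q : Matrix (Fin n) (Fin n) ℝ} (hQt : Qᵀ = Q)
    (hQQ : Q * Q = Q) (V : Matrix (Fin n) (Fin k) ℝ) (i : Fin k) : 0 ≤ (Vᵀ * Q * V) i i := by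
  have h : (Q * V)ᴴ * (Q * V) = Vᵀ * Q * V := by
    rw [conjTranspose_eq_transpose_of_trivial, transpose_mul, hQt, Matrix.mul_assoc,
      ← Matrix.mul_assoc Q Q V, hQQ, Matrix.mul_assoc]
  rw [← h]
  exact (posSemidef_conjTranspose_mul_self _).diag_nonneg

lemma sum_mu_le_trace_annMat_mul (hS : S.PosSemidef) (hm : m ≤ n)
    (F : Matrix (Fin n) (Fin m) ℝ) :
    ∑ k ∈ {k : Fin n | m ≤ (k : ℕ)}, mu S (k + 1) ≤ trace (annMat F * S) := by
  set V := sortedEigenvectors hS.isHermitian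
  have hp₁ : ∀ k, (Vᵀ * annMat F * V) k k ≤ 1 := by
    intro k
    have hsplit : Vᵀ * annMat F * V + Vᵀ * projMat F * V = 1 := by
      rw [← Matrix.add_mul, ← Matrix.mul_add, annMat, sub_add_cancel, Matrix.mul_one,
        sortedEigenvectors_transpose_mul_self]
    have hkk := congrFun (congrFun hsplit k) k
    rw [Matrix.add_apply, one_apply_eq] at hkk
    linarith [diag_transpose_mul_mul_nonneg (projMat_transpose F) (projMat_mul_projMat F) V k]
  have hsum : (n : ℝ) - m ≤ ∑ k, (Vᵀ * annMat F * V) k k := by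
    have htr : ∑ k, (Vᵀ * annMat F * V) k k = n - trace (projMat F) := by
      change trace (Vᵀ * annMat F * V) = _
      rw [trace_mul_cycle, sortedEigenvectors_mul_transpose_self, Matrix.one_mul, annMat,
        trace_sub, trace_one, Fintype.card_fin]
    linarith [trace_projMat_le F]
  rw [trace_mul_eq_sum_mul_mu hS.isHermitian]
  simp_rw [mul_comm _ (mu S _)]
  refine sum_le_sum_mul_of_card_le_sum (mu_succ_nonneg hS) (fun i hi j hj => ?_)
    (diag_transpose_mul_mul_nonneg (annMat_transpose F) (annMat_mul_annMat F) V) hp₁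
    (by rwa [Fin.card_filter_le_val, Nat.cast_sub hm])
  simp only [mem_filter, mem_univ, true_and, not_le] at hi hj
  exact antitone_mu_succ hS.isHermitian (Fin.le_iff_val_le_val.mpr (by omega))

lemma exists_transpose_mul_self_eq_one_and_trace_annMat_mul_eq (hS : S.IsHermitian) (hm : m ≤ n) :
    ∃ F : Matrix (Fin n) (Fin m) ℝ, Fᵀ * F = 1 ∧
      trace (annMat F * S) = ∑ k ∈ {k : Fin n | m ≤ (k : ℕ)}, mu S (k + 1) := by
  set V := sortedEigenvectors hS
  have hV : Vᵀ * V = 1 := sortedEigenvectors_transpose_mul_self hS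
  set F := V.submatrix id (Fin.castLE hm)
  have hVF : Vᵀ * F = (1 : Matrix (Fin n) (Fin n) ℝ).submatrix id (Fin.castLE hm) := by
    rw [← hV, submatrix_mul _ _ id id _ Function.bijective_id, submatrix_id_id]
  have hF : Fᵀ * F = 1 := by
    rw [transpose_submatrix, ← submatrix_mul _ _ _ _ _ Function.bijective_id, hV]
    exact submatrix_one_embedding (Fin.castLEEmb hm)
  have hM : Vᵀ * annMat F * V = 1 - (Vᵀ * F) * (Vᵀ * F)ᵀ := by
    rw [annMat, projMat_eq_mul_transpose hF, Matrix.mul_sub, Matrix.sub_mul, Matrix.mul_one, hV]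
    simp only [transpose_mul, transpose_transpose, Matrix.mul_assoc]
  have hdiag : ∀ k, (Vᵀ * annMat F * V) k k = if m ≤ (k : ℕ) then 1 else 0 := by
    intro k
    rw [hM, hVF]
    by_cases hk : (k : ℕ) < m
    · obtain ⟨l, rfl⟩ : ∃ l : Fin m, Fin.castLE hm l = k := ⟨⟨k, hk⟩, rfl⟩
      simp [mul_apply, one_apply, (Fin.castLE_injective hm).eq_iff]
    · have hne : ∀ l : Fin m, Fin.castLE hm l ≠ k := fun l h => hk (h ▸ l.isLt)
      simp [mul_apply, one_apply, hne, not_lt.mp hk]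
  refine ⟨F, hF, ?_⟩
  rw [trace_mul_eq_sum_mul_mu hS, sum_filter]
  exact sum_congr rfl fun k _ => by rw [hdiag k, ite_mul, one_mul, zero_mul]

end

/-- The infimum over Λ ∈ ℝ^{N×R}, F ∈ ℝ^{T×R} of ‖A − ΛF'‖²_HS equals
the infimum over F of Tr(A M_F A'), both equal Σ_{r=R+1}^{T} μ_r(A'A), and both infima
are attained. -/
theorem statement2 {N T : ℕ} (A : Matrix (Fin N) (Fin T) ℝ) (R : ℕ) (hR : R ≤ T) :
    sInf {x : ℝ | ∃ (Λ : Matrix (Fin N) (Fin R) ℝ) (F : Matrix (Fin T) (Fin R) ℝ),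
        x = frobSq (A - Λ * Fᵀ)} =
      sInf {x : ℝ | ∃ F : Matrix (Fin T) (Fin R) ℝ,
        x = Matrix.trace (A * annMat F * Aᵀ)} ∧
    sInf {x : ℝ | ∃ (Λ : Matrix (Fin N) (Fin R) ℝ) (F : Matrix (Fin T) (Fin R) ℝ),
        x = frobSq (A - Λ * Fᵀ)} =
      ∑ r ∈ Finset.Icc (R + 1) T, mu (Aᵀ * A) r ∧
    (∃ (Λ : Matrix (Fin N) (Fin R) ℝ) (F : Matrix (Fin T) (Fin R) ℝ),
        frobSq (A - Λ * Fᵀ) = ∑ r ∈ Finset.Icc (R + 1) T, mu (Aᵀ * A) r) ∧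
    (∃ F : Matrix (Fin T) (Fin R) ℝ,
        Matrix.trace (A * annMat F * Aᵀ) = ∑ r ∈ Finset.Icc (R + 1) T, mu (Aᵀ * A) r) := by
  set v := ∑ r ∈ Finset.Icc (R + 1) T, mu (Aᵀ * A) r
  have hS : (Aᵀ * A).PosSemidef := by
    simpa [conjTranspose_eq_transpose_of_trivial] using posSemidef_conjTranspose_mul_self A
  have htrace (F : Matrix (Fin T) (Fin R) ℝ) :
      trace (A * annMat F * Aᵀ) = trace (annMat F * (Aᵀ * A)) := by
    rw [trace_mul_cycle, trace_mul_comm]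
  have hv : v = ∑ k ∈ {k : Fin T | R ≤ (k : ℕ)}, mu (Aᵀ * A) (k + 1) :=
    sum_Icc_eq_sum_filter_le_val _ T R
  have lower (F : Matrix (Fin T) (Fin R) ℝ) : v ≤ trace (A * annMat F * Aᵀ) := by
    rw [hv, htrace]
    exact sum_mu_le_trace_annMat_mul hS hR F
  obtain ⟨F₀, hF₀, hF₀S⟩ :=
    exists_transpose_mul_self_eq_one_and_trace_annMat_mul_eq hS.isHermitian hR
  have attained : trace (A * annMat F₀ * Aᵀ) = v := by rw [htrace, hF₀S, hv]
  have least₂ : IsLeast {x | ∃ F : Matrix (Fin T) (Fin R) ℝ, x = trace (A * annMat F * Aᵀ)} v :=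
    ⟨⟨F₀, attained.symm⟩, by rintro _ ⟨F, rfl⟩; exact lower F⟩
  have least₁ : IsLeast {x | ∃ (Λ : Matrix (Fin N) (Fin R) ℝ) (F : Matrix (Fin T) (Fin R) ℝ),
      x = frobSq (A - Λ * Fᵀ)} v :=
    ⟨⟨A * F₀, F₀, by rw [frobSq_sub_mul_mul_transpose hF₀, attained]⟩, by
      rintro _ ⟨Λ, F, rfl⟩
      exact (lower F).trans (trace_mul_annMat_mul_transpose_le A Λ F)⟩
  refine ⟨by rw [least₁.csInf_eq, least₂.csInf_eq], least₁.csInf_eq, ?_, ⟨F₀, attained⟩⟩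
  obtain ⟨Λ, F, h⟩ := least₁.1
  exact ⟨Λ, F, h.symm⟩
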